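/- Define sequences of positive integers by n_0 = 45, n_{m+1} = 2·(2^{m+5} − 1)·n_m, and k_0 = 7, k_{m+1} = 2·(2^{m+5} − 2(m+5) − 1)·(k_m − 1), for m ≥ 0. Then there exists a natural number N such that for every m ≥ 0 and every natural number n ≥ N·n_m, 20·⌊n/n_m⌋·k_m > n. -/

import Mathlib

/-- Block length of the level-`m` code `C_m`: `n_0 = 45`, `n_{m+1} = 2·(2^{m+5} − 1)·n_m`. -/
def towerBlockLength : ℕ → ℕ
  | 0 => 45
  | m + 1 => 2 * (2 ^ (m + 5) - 1) * towerBlockLength m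

/-- Number of logical qubits of the level-`m` code `C_m`:
`k_0 = 7`, `k_{m+1} = 2·(2^{m+5} − 2(m+5) − 1)·(k_m − 1)`. -/
def towerLogicalQubits : ℕ → ℕ
  | 0 => 7
  | m + 1 => 2 * (2 ^ (m + 5) - 2 * (m + 5) - 1) * (towerLogicalQubits m - 1)

/-!
Write `p = m + 5` and `q = 2 ^ p`. Passing from level `m` to level `m + 1` multiplies the rate
`k_m / n_m` by `(1 - 2p / (q - 1)) * (1 - 1 / k_m)`. Since `k_m ≥ q ^ 2` from level `3` on, this loss
is paid for by the decrease of the correction term in the invariant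
`k_m / n_m ≥ (11 / 200) * (1 + (5p + 5) / q)`, checked directly for `m ≤ 3`.
A rate above `11 / 200 > 1 / 20` survives the rounding `⌊n / n_m⌋` once there are at least ten blocks.
-/

theorem twenty_mul_add_twentySix_le_two_pow {p : ℕ} (hp : 8 ≤ p) : 20 * p + 26 ≤ 2 ^ p := by
  induction p, hp using Nat.le_induction with
  | base => norm_num
  | succ p _ ih => rw [pow_succ]; omega

theorem towerBlockLength_pos (m : ℕ) : 0 < towerBlockLength m := by
  induction m with
  | zero => decide
  | succ m ih =>
    have : 2 ≤ 2 ^ (m + 5) := Nat.le_self_pow (by omega) 2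
    simp only [towerBlockLength]
    have : 0 < 2 ^ (m + 5) - 1 := by omega
    positivity

theorem two_pow_sq_le_towerLogicalQubits {m : ℕ} (hm : 3 ≤ m) :
    (2 ^ (m + 5)) ^ 2 ≤ towerLogicalQubits m := by
  induction m, hm using Nat.le_induction with
  | base => decide
  | succ m hm ih =>
    have hq := twenty_mul_add_twentySix_le_two_pow (p := m + 5) (by omega)
    set q := 2 ^ (m + 5)
    have : 5 * q ≤ q * q := Nat.mul_le_mul_right _ (by omega)
    calc (2 ^ (m + 1 + 5)) ^ 2 = 4 * q * q := by rw [pow_succ]; ring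
      _ ≤ (q ^ 2 - 1) * (2 * (q - 2 * (m + 5) - 1)) := by
        rw [sq]; apply Nat.mul_le_mul <;> omega
      _ ≤ towerLogicalQubits (m + 1) := by
        rw [towerLogicalQubits, mul_comm]
        exact Nat.mul_le_mul_left _ (by omega)

theorem tower_step_factor_le {p q k : ℕ} (hp : 8 ≤ p) (hq : 20 * p + 26 ≤ q) (hk : q ^ 2 ≤ k) :
    (q - 1) * (2 * q + 5 * (p + 1) + 5) * k ≤ 2 * (q - 2 * p - 1) * (q + 5 * p + 5) * (k - 1) := by
  -- The right side minus the left is `p (q - 20p - 25) k - 2 (q - 2p - 1) (q + 5p + 5)`.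
  obtain ⟨e, rfl⟩ : ∃ e, q = e + 20 * p + 26 := ⟨q - (20 * p + 26), by omega⟩
  have hk1 : 1 ≤ k := le_trans (Nat.one_le_pow _ _ (by omega)) hk
  obtain ⟨c, rfl⟩ : ∃ c, k = c + 1 := ⟨k - 1, by omega⟩
  rw [show e + 20 * p + 26 - 1 = e + 20 * p + 25 by omega,
    show e + 20 * p + 26 - 2 * p - 1 = e + 18 * p + 25 by omega, Nat.add_sub_cancel]
  have h1 : 8 * (e + 20 * p + 26) ^ 2 ≤ p * (e + 1) * (c + 1) :=
    Nat.mul_le_mul (by nlinarith) hk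
  nlinarith

theorem tower_rate_step {p q n k : ℕ} (hp : 8 ≤ p) (hq : 20 * p + 26 ≤ q) (hk : q ^ 2 ≤ k)
    (h : 11 * (q + 5 * p + 5) * n ≤ 200 * q * k) :
    11 * (2 * q + 5 * (p + 1) + 5) * (2 * (q - 1) * n)
      ≤ 200 * (2 * q) * (2 * (q - 2 * p - 1) * (k - 1)) := by
  have hfac := tower_step_factor_le hp hq hk
  refine Nat.le_of_mul_le_mul_left ?_ (show 0 < q + 5 * p + 5 by omega)
  calc (q + 5 * p + 5) * (11 * (2 * q + 5 * (p + 1) + 5) * (2 * (q - 1) * n))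
      = 2 * (q - 1) * (2 * q + 5 * (p + 1) + 5) * (11 * (q + 5 * p + 5) * n) := by ring
    _ ≤ 2 * (q - 1) * (2 * q + 5 * (p + 1) + 5) * (200 * q * k) := by gcongr
    _ = 400 * q * ((q - 1) * (2 * q + 5 * (p + 1) + 5) * k) := by ring
    _ ≤ 400 * q * (2 * (q - 2 * p - 1) * (q + 5 * p + 5) * (k - 1)) := by gcongr
    _ = (q + 5 * p + 5) * (200 * (2 * q) * (2 * (q - 2 * p - 1) * (k - 1))) := by ring

theorem tower_rate_tail_bound (m : ℕ) :
    11 * (2 ^ (m + 5) + 5 * (m + 5) + 5) * towerBlockLength m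
      ≤ 200 * 2 ^ (m + 5) * towerLogicalQubits m := by
  obtain hm | hm := lt_or_ge m 3
  · interval_cases m <;> decide
  induction m, hm using Nat.le_induction with
  | base => decide
  | succ m hm ih =>
    have hk := two_pow_sq_le_towerLogicalQubits hm
    rw [towerBlockLength, towerLogicalQubits, pow_succ, mul_comm _ 2]
    exact tower_rate_step (by omega) (twenty_mul_add_twentySix_le_two_pow (by omega)) hk ih

theorem eleven_mul_towerBlockLength_le (m : ℕ) :
    11 * towerBlockLength m ≤ 200 * towerLogicalQubits m := by
  have h := tower_rate_tail_bound m
  refine Nat.le_of_mul_le_mul_left (c := 2 ^ (m + 5)) ?_ (by positivity)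
  calc 2 ^ (m + 5) * (11 * towerBlockLength m)
      ≤ 11 * (2 ^ (m + 5) + 5 * (m + 5) + 5) * towerBlockLength m := by
        rw [← mul_assoc, mul_comm _ 11]; gcongr; omega
    _ ≤ _ := h
    _ = _ := by ring

theorem lt_twenty_mul_div_mul {L k n : ℕ} (hL : 0 < L) (hrate : 11 * L ≤ 200 * k)
    (hn : 10 * L ≤ n) : n < 20 * (n / L) * k := by
  have hq : 10 ≤ n / L := (Nat.le_div_iff_mul_le hL).2 (by linarith)
  have hlt : n < n / L * L + L := Nat.lt_div_mul_add hL
  nlinarith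

/-- Chunking `n` physical qubits into `⌊n/n_m⌋` blocks, each an independent copy of
`C_m` with `k_m` logical qubits, yields more than `n/20` logical qubits once `n` is
sufficiently large relative to the block size: there is `N` such that for every `m`
and every `n ≥ N·n_m`, `20·⌊n/n_m⌋·k_m > n`. -/
theorem chunked_memory_rate :
    ∃ N : ℕ, ∀ m : ℕ, ∀ n : ℕ, N * towerBlockLength m ≤ n →
      20 * (n / towerBlockLength m) * towerLogicalQubits m > n :=
  ⟨10, fun m _ hn =>
    lt_twenty_mul_div_mul (towerBlockLength_pos m) (eleven_mul_towerBlockLength_le m) hn⟩
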